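/- Let Φ: G → H be a right resolver between finite strongly connected graphs and suppose there exists a bi-resolver from G to H with the same vertex map as Φ. Then every fiber of ∂Φ contains a maximal synchronized set under Φ. -/
import Mathlib


/-- A finite directed multigraph. -/
structure MGraph where
  V : Type
  E : Type
  [fV : Fintype V]
  [fE : Fintype E]
  src : E → V
  tgt : E → V

attribute [instance] MGraph.fV MGraph.fE

namespace MGraph

/-- `G.IsPathFrom I w` : the list of edges `w` is a path starting at `I`. -/
def IsPathFrom (G : MGraph) : G.V → List G.E → Prop
  | _, [] => True
  | I, e :: es => G.src e = I ∧ G.IsPathFrom (G.tgt e) es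

/-- Terminal vertex of the path `w` starting at `I`. -/
def pathEnd (G : MGraph) : G.V → List G.E → G.V
  | I, [] => I
  | _, e :: es => G.pathEnd (G.tgt e) es

def StronglyConnected (G : MGraph) : Prop :=
  ∀ I J : G.V, ∃ w : List G.E, G.IsPathFrom I w ∧ G.pathEnd I w = J

/-- Graph homomorphism. -/
structure Hom (G H : MGraph) where
  vmap : G.V → H.V
  emap : G.E → H.E
  src_map : ∀ e, H.src (emap e) = vmap (G.src e)
  tgt_map : ∀ e, H.tgt (emap e) = vmap (G.tgt e)

/-- Right resolving: surjective, and a bijection on outgoing edge sets. -/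
def Hom.RightResolving {G H : MGraph} (Φ : Hom G H) : Prop :=
  Function.Surjective Φ.vmap ∧
  ∀ I : G.V, Set.BijOn Φ.emap {e | G.src e = I} {f | H.src f = Φ.vmap I}

/-- Left resolving: surjective, and a bijection on incoming edge sets. -/
def Hom.LeftResolving {G H : MGraph} (Φ : Hom G H) : Prop :=
  Function.Surjective Φ.vmap ∧
  ∀ I : G.V, Set.BijOn Φ.emap {e | G.tgt e = I} {f | H.tgt f = Φ.vmap I}

def Hom.BiResolving {G H : MGraph} (Φ : Hom G H) : Prop :=
  Φ.RightResolving ∧ Φ.LeftResolving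

/-- Forward action: terminal vertices of lifts of `w` starting in `U`. -/
def Hom.fwd {G H : MGraph} (Φ : Hom G H) (U : Set G.V) (w : List H.E) : Set G.V :=
  {J' | ∃ I' ∈ U, ∃ π : List G.E,
    G.IsPathFrom I' π ∧ π.map Φ.emap = w ∧ G.pathEnd I' π = J'}

/-- Backward action: starting vertices whose lift of `w` ends in `S`. -/
def Hom.bwd {G H : MGraph} (Φ : Hom G H) (w : List H.E) (S : Set G.V) : Set G.V :=
  {J' | ∃ π : List G.E,
    G.IsPathFrom J' π ∧ π.map Φ.emap = w ∧ G.pathEnd J' π ∈ S}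

end MGraph

open MGraph


/-- `S` is a synchronized set of `Φ` over the vertex `J` of `H`:
`S = u ·_Φ I₀` for some path `u` in `H` from `J` to `∂Φ(I₀)`. -/
def MGraph.Hom.Synced {G H : MGraph} (Φ : MGraph.Hom G H) (J : H.V) (S : Set G.V) : Prop :=
  ∃ (u : List H.E) (I₀ : G.V),
    H.IsPathFrom J u ∧ H.pathEnd J u = Φ.vmap I₀ ∧ S = Φ.bwd u {I₀}

/-- `S` is a maximal synchronized set (MSS) of `Φ` over `J`: a synchronized set such
that `|v ·_Φ S| ≤ |S|` for every path `v` in `H` ending at `J`. -/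
def MGraph.Hom.IsMSS {G H : MGraph} (Φ : MGraph.Hom G H) (J : H.V) (S : Set G.V) : Prop :=
  Φ.Synced J S ∧
  ∀ (K : H.V) (v : List H.E), H.IsPathFrom K v → H.pathEnd K v = J →
    (Φ.bwd v S).ncard ≤ S.ncard

namespace MGraph

variable {G H : MGraph}

lemma isPathFrom_append (G : MGraph) (p q : List G.E) : ∀ I : G.V,
    G.IsPathFrom I (p ++ q) ↔ G.IsPathFrom I p ∧ G.IsPathFrom (G.pathEnd I p) q := by
  induction p with
  | nil => intro I; simp [IsPathFrom, pathEnd]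
  | cons e es ih => intro I; simp [IsPathFrom, pathEnd, ih, and_assoc]

lemma pathEnd_append (G : MGraph) (p q : List G.E) : ∀ I : G.V,
    G.pathEnd I (p ++ q) = G.pathEnd (G.pathEnd I p) q := by
  induction p with
  | nil => intro I; simp [pathEnd]
  | cons e es ih => intro I; simp [pathEnd, ih]

lemma Hom.map_isPathFrom (Φ : Hom G H) : ∀ (π : List G.E) (I : G.V),
    G.IsPathFrom I π → H.IsPathFrom (Φ.vmap I) (π.map Φ.emap) := by
  intro π
  induction π with
  | nil => intro I _; trivial
  | cons e es ih =>
    rintro I ⟨h1, h2⟩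
    refine ⟨by rw [Φ.src_map, h1], ?_⟩
    rw [Φ.tgt_map]
    exact ih _ h2

lemma Hom.map_pathEnd (Φ : Hom G H) : ∀ (π : List G.E) (I : G.V),
    H.pathEnd (Φ.vmap I) (π.map Φ.emap) = Φ.vmap (G.pathEnd I π) := by
  intro π
  induction π with
  | nil => intro I; rfl
  | cons e es ih =>
    intro I
    show H.pathEnd (H.tgt (Φ.emap e)) _ = _
    rw [Φ.tgt_map]
    exact ih (G.tgt e)

lemma Hom.lift_unique {Φ : Hom G H} (hΦ : Φ.RightResolving) :
    ∀ (π π' : List G.E) (J' : G.V), G.IsPathFrom J' π → G.IsPathFrom J' π' →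
      π.map Φ.emap = π'.map Φ.emap → π = π' := by
  intro π
  induction π with
  | nil =>
    intro π' J' _ _ hm
    exact (List.map_eq_nil_iff.mp hm.symm).symm
  | cons e es ih =>
    rintro (_ | ⟨e', es'⟩) J' hp hp' hm
    · exact absurd hm (by simp)
    · obtain ⟨h1, h2⟩ := hp
      obtain ⟨h1', h2'⟩ := hp'
      simp only [List.map_cons, List.cons.injEq] at hm
      have hee : e = e' := (hΦ.2 J').injOn h1 h1' hm.1
      subst hee
      rw [ih es' (G.tgt e) h2 h2' hm.2]

lemma Hom.lift_exists {Φ : Hom G H} (hΦ : Φ.RightResolving) :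
    ∀ (w : List H.E) (J' : G.V), H.IsPathFrom (Φ.vmap J') w →
      ∃ π, G.IsPathFrom J' π ∧ π.map Φ.emap = w ∧
        Φ.vmap (G.pathEnd J' π) = H.pathEnd (Φ.vmap J') w := by
  intro w
  induction w with
  | nil => intro J' _; exact ⟨[], trivial, rfl, rfl⟩
  | cons f ws ih =>
    rintro J' ⟨hf, hws⟩
    obtain ⟨e, he1, he2⟩ := (hΦ.2 J').surjOn (show f ∈ {g | H.src g = Φ.vmap J'} from hf)
    have htgt : Φ.vmap (G.tgt e) = H.tgt f := by rw [← Φ.tgt_map, he2]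
    obtain ⟨π, hπ1, hπ2, hπ3⟩ := ih (G.tgt e) (by rw [htgt]; exact hws)
    refine ⟨e :: π, ⟨he1, hπ1⟩, by simp [he2, hπ2], ?_⟩
    show Φ.vmap (G.pathEnd (G.tgt e) π) = H.pathEnd (H.tgt f) ws
    rw [hπ3, htgt]

lemma Hom.bwd_nil (Φ : Hom G H) (S : Set G.V) : Φ.bwd [] S = S := by
  ext J'
  constructor
  · rintro ⟨π, _, hm, he⟩
    rw [List.map_eq_nil_iff.mp hm] at he
    exact he
  · intro h; exact ⟨[], trivial, rfl, h⟩

lemma Hom.bwd_empty (Φ : Hom G H) (w : List H.E) : Φ.bwd w (∅ : Set G.V) = ∅ := by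
  ext J'
  simp only [Set.mem_empty_iff_false, iff_false]
  rintro ⟨π, _, _, he⟩
  exact he

lemma Hom.bwd_append (Φ : Hom G H) (v w : List H.E) (S : Set G.V) :
    Φ.bwd (v ++ w) S = Φ.bwd v (Φ.bwd w S) := by
  ext J'
  constructor
  · rintro ⟨π, hp, hm, he⟩
    obtain ⟨p1, p2, rfl, hm1, hm2⟩ : ∃ p1 p2, π = p1 ++ p2 ∧
        p1.map Φ.emap = v ∧ p2.map Φ.emap = w := by
      refine ⟨π.take v.length, π.drop v.length, (List.take_append_drop _ _).symm, ?_, ?_⟩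
      · rw [List.map_take, hm, List.take_left]
      · rw [List.map_drop, hm, List.drop_left]
    obtain ⟨h1, h2⟩ := (G.isPathFrom_append p1 p2 J').mp hp
    exact ⟨p1, h1, hm1, p2, h2, hm2, by rw [← G.pathEnd_append]; exact he⟩
  · rintro ⟨π₁, hp1, hm1, π₂, hp2, hm2, he⟩
    refine ⟨π₁ ++ π₂, (G.isPathFrom_append _ _ _).mpr ⟨hp1, hp2⟩, by simp [hm1, hm2], ?_⟩
    rw [G.pathEnd_append]
    exact he

lemma fiber_card_edge {Ψ : Hom G H} (hΨ : Ψ.BiResolving) (f : H.E) :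
    Nat.card (Ψ.vmap ⁻¹' {H.src f} : Set G.V) = Nat.card (Ψ.vmap ⁻¹' {H.tgt f} : Set G.V) := by
  obtain ⟨⟨_, hR⟩, ⟨_, hL⟩⟩ := hΨ
  have h1 : Nat.card {e : G.E // Ψ.emap e = f} = Nat.card (Ψ.vmap ⁻¹' {H.src f} : Set G.V) := by
    apply Nat.card_congr
    refine Equiv.ofBijective
      (fun e => ⟨G.src e.1, show Ψ.vmap (G.src e.1) = H.src f by rw [← Ψ.src_map, e.2]⟩)
      ⟨?_, ?_⟩
    · rintro ⟨e, he⟩ ⟨e', he'⟩ h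
      have hs : G.src e = G.src e' := congrArg Subtype.val h
      exact Subtype.ext ((hR (G.src e)).injOn rfl hs.symm (he.trans he'.symm))
    · rintro ⟨I', hI'⟩
      obtain ⟨e, he1, he2⟩ := (hR I').surjOn
        (show f ∈ {g | H.src g = Ψ.vmap I'} from hI'.symm)
      exact ⟨⟨e, he2⟩, Subtype.ext he1⟩
  have h2 : Nat.card {e : G.E // Ψ.emap e = f} = Nat.card (Ψ.vmap ⁻¹' {H.tgt f} : Set G.V) := by
    apply Nat.card_congr
    refine Equiv.ofBijective
      (fun e => ⟨G.tgt e.1, show Ψ.vmap (G.tgt e.1) = H.tgt f by rw [← Ψ.tgt_map, e.2]⟩)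
      ⟨?_, ?_⟩
    · rintro ⟨e, he⟩ ⟨e', he'⟩ h
      have hs : G.tgt e = G.tgt e' := congrArg Subtype.val h
      exact Subtype.ext ((hL (G.tgt e)).injOn rfl hs.symm (he.trans he'.symm))
    · rintro ⟨I', hI'⟩
      obtain ⟨e, he1, he2⟩ := (hL I').surjOn
        (show f ∈ {g | H.tgt g = Ψ.vmap I'} from hI'.symm)
      exact ⟨⟨e, he2⟩, Subtype.ext he1⟩
  rw [← h1, h2]

lemma fiber_card_path {Ψ : Hom G H} (hΨ : Ψ.BiResolving) :
    ∀ (w : List H.E) (A : H.V), H.IsPathFrom A w →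
      Nat.card (Ψ.vmap ⁻¹' {A} : Set G.V) = Nat.card (Ψ.vmap ⁻¹' {H.pathEnd A w} : Set G.V) := by
  intro w
  induction w with
  | nil => intro A _; rfl
  | cons f ws ih =>
    rintro A ⟨hf, hws⟩
    show _ = Nat.card (Ψ.vmap ⁻¹' {H.pathEnd (H.tgt f) ws} : Set G.V)
    rw [← ih (H.tgt f) hws, ← hf]
    exact fiber_card_edge hΨ f

lemma fiber_card {Ψ : Hom G H} (hΨ : Ψ.BiResolving) (hH : H.StronglyConnected) (A B : H.V) :
    Nat.card (Ψ.vmap ⁻¹' {A} : Set G.V) = Nat.card (Ψ.vmap ⁻¹' {B} : Set G.V) := by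
  obtain ⟨w, hw, hwe⟩ := hH A B
  rw [← hwe]
  exact fiber_card_path hΨ w A hw

end MGraph


/-- If a right resolver between strongly connected graphs shares its
vertex map with a bi-resolver, then every fiber of the vertex map contains a maximal
synchronized set. -/
theorem every_fiber_contains_mss {G H : MGraph}
    (hG : G.StronglyConnected) (hH : H.StronglyConnected)
    (Φ Ψ : MGraph.Hom G H) (hΦ : Φ.RightResolving) (hΨ : Ψ.BiResolving)
    (hvmap : Ψ.vmap = Φ.vmap) (J : H.V) :
    ∃ S : Set G.V, S ⊆ Φ.vmap ⁻¹' {J} ∧ Φ.IsMSS J S := by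
  classical
  by_cases hP : ∃ (a b : G.V) (πa πb : List G.E), Φ.vmap a = Φ.vmap b ∧ a ≠ b ∧
      G.IsPathFrom a πa ∧ G.IsPathFrom b πb ∧ πa.map Φ.emap = πb.map Φ.emap ∧
      G.pathEnd a πa = G.pathEnd b πb
  · -- collision case: the empty set is an MSS
    obtain ⟨a, b, πa, πb, hab, habne, hpa, hpb, hm, hend⟩ := hP
    set A := Φ.vmap a with hA
    set w := πa.map Φ.emap with hw
    have hwpath : H.IsPathFrom A w := Φ.map_isPathFrom πa a hpa
    set B := H.pathEnd A w with hB
    have hwne : w ≠ [] := by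
      intro h
      apply habne
      have ha0 : πa = [] := List.map_eq_nil_iff.mp h
      have hb0 : πb = [] := List.map_eq_nil_iff.mp (by rw [← hm, h])
      rw [ha0] at hend; rw [hb0] at hend
      exact hend
    have hcard : Nat.card (Φ.vmap ⁻¹' {A} : Set G.V) = Nat.card (Φ.vmap ⁻¹' {B} : Set G.V) := by
      rw [← hvmap]
      exact fiber_card hΨ hH A B
    have hex : ∀ x : (Φ.vmap ⁻¹' {A} : Set G.V), ∃ y : (Φ.vmap ⁻¹' {B} : Set G.V),
        ∃ π, G.IsPathFrom x.1 π ∧ π.map Φ.emap = w ∧ G.pathEnd x.1 π = y.1 := by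
      rintro ⟨J', hJ'⟩
      have hJ'' : Φ.vmap J' = A := hJ'
      obtain ⟨π, h1, h2, h3⟩ := MGraph.Hom.lift_exists hΦ w J' (by rw [hJ'']; exact hwpath)
      refine ⟨⟨G.pathEnd J' π, show Φ.vmap _ = B from ?_⟩, π, h1, h2, rfl⟩
      rw [h3, hJ'']
    choose t lft hl1 hl2 hl3 using hex
    have hbij : ¬ Function.Injective t := by
      intro hinj
      set xa : (Φ.vmap ⁻¹' {A} : Set G.V) := ⟨a, rfl⟩
      set xb : (Φ.vmap ⁻¹' {A} : Set G.V) := ⟨b, hab.symm⟩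
      have h1 : lft xa = πa :=
        MGraph.Hom.lift_unique hΦ (lft xa) πa a (hl1 xa) hpa ((hl2 xa).trans hw)
      have h2 : lft xb = πb :=
        MGraph.Hom.lift_unique hΦ (lft xb) πb b (hl1 xb) hpb ((hl2 xb).trans (hw.trans hm))
      have : t xa = t xb := by
        apply Subtype.ext
        rw [← hl3 xa, ← hl3 xb]
        show G.pathEnd a (lft xa) = G.pathEnd b (lft xb)
        rw [h1, h2, hend]
      have := hinj this
      apply habne
      exact congrArg Subtype.val this
    have hnsurj : ¬ Function.Surjective t := by
      intro hsurj
      exact hbij ((Nat.bijective_iff_surjective_and_card t).mpr ⟨hsurj, hcard⟩).1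
    rw [Function.Surjective] at hnsurj
    push_neg at hnsurj
    obtain ⟨y, hy⟩ := hnsurj
    have key : ∀ (J' : G.V) (π' : List G.E), G.IsPathFrom J' π' → π'.map Φ.emap = w →
        G.pathEnd J' π' ≠ y.1 := by
      intro J' π' hp' hm' hcontra
      have hJ'A : Φ.vmap J' = A := by
        rcases π' with _ | ⟨e, es⟩
        · exact absurd hm'.symm hwne
        · have hw2 : H.IsPathFrom A ((e :: es).map Φ.emap) := by rw [hm']; exact hwpath
          obtain ⟨h1, -⟩ := hw2
          obtain ⟨h2, -⟩ := hp'
          rw [← h2, ← Φ.src_map]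
          exact h1
      set x : (Φ.vmap ⁻¹' {A} : Set G.V) := ⟨J', hJ'A⟩
      have hu : lft x = π' :=
        MGraph.Hom.lift_unique hΦ (lft x) π' J' (hl1 x) hp' ((hl2 x).trans hm'.symm)
      apply hy x
      apply Subtype.ext
      rw [← hl3 x]
      show G.pathEnd J' (lft x) = y.1
      rw [hu, hcontra]
    obtain ⟨v, hv, hvend⟩ := hH J A
    have hbwdw : Φ.bwd w ({y.1} : Set G.V) = ∅ := by
      ext J'
      simp only [Set.mem_empty_iff_false, iff_false]
      rintro ⟨π', hp', hm', he'⟩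
      exact key J' π' hp' hm' he'
    refine ⟨∅, Set.empty_subset _, ⟨v ++ w, y.1, ?_, ?_, ?_⟩, ?_⟩
    · exact (H.isPathFrom_append v w J).mpr ⟨hv, by rw [hvend]; exact hwpath⟩
    · rw [H.pathEnd_append, hvend, ← hB, y.2]
    · rw [Φ.bwd_append, hbwdw, Φ.bwd_empty]
    · intro K v' _ _
      simp [Φ.bwd_empty]
  · -- no collision: a singleton is an MSS
    push_neg at hP
    obtain ⟨I₀, hI₀⟩ := hΦ.1 J
    refine ⟨{I₀}, by simp [hI₀], ⟨[], I₀, trivial, hI₀.symm, (Φ.bwd_nil _).symm⟩, ?_⟩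
    intro K v hv hvend
    cases v with
    | nil => exact le_of_eq (congrArg Set.ncard (Φ.bwd_nil _))
    | cons f vs =>
      rw [Set.ncard_singleton, Set.ncard_le_one (Set.toFinite _)]
      rintro x ⟨πx, hpx, hmx, hex⟩ z ⟨πz, hpz, hmz, hez⟩
      rcases πx with _ | ⟨ex, πx'⟩
      · simp at hmx
      rcases πz with _ | ⟨ez, πz'⟩
      · simp at hmz
      have hmm : (ex :: πx').map Φ.emap = (ez :: πz').map Φ.emap := by rw [hmx, hmz]
      have hxz : Φ.vmap x = Φ.vmap z := by
        simp only [List.map_cons, List.cons.injEq] at hmx hmz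
        obtain ⟨h2, -⟩ := hpx
        obtain ⟨h3, -⟩ := hpz
        rw [← h2, ← h3, ← Φ.src_map, ← Φ.src_map, hmx.1, hmz.1]
      by_contra hne
      exact hP x z _ _ hxz hne hpx hpz hmm
        ((Set.mem_singleton_iff.mp hex).trans (Set.mem_singleton_iff.mp hez).symm)
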